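/- If A is a p×p real positive semi-definite matrix of rank K whose first K columns are linearly independent, then there exists a unique matrix N in R^{p×K} such that A = N Nᵀ, N is mock lower triangular (N_{ij} = 0 for i < j), and the diagonal entries N_{ii} for 1 ≤ i ≤ K are all positive. -/

import Mathlib

/-!
Write `A = gram v` for vectors `v₁, …, v_p` of a Euclidean space (possible since `A` is positive
semidefinite). The rank condition says that `v₁, …, v_K` form a basis of the span `W` of all the
`vᵢ`, so Gram–Schmidt applied to them yields an orthonormal basis `b` of `W` with `⟪b_j, vᵢ⟫ = 0`
for `i < j` and `⟪b_i, vᵢ⟫ > 0`; Parseval in `W` then gives `A = N Nᵀ` for `N i j = ⟪vᵢ, b_j⟫`.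

For uniqueness, the top `K × K` block `L` of a reduced Cholesky factor `N` is an ordinary Cholesky
factor of the top-left block of `A`, hence unique, and `N = A[:, :K] (Lᵀ)⁻¹` is then determined.
-/

open Matrix InnerProductSpace Module Submodule
open scoped ComplexOrder

namespace Matrix

section Cholesky

variable {n R : Type*} [Fintype n] [LinearOrder n] [Field R] [LinearOrder R]
  [IsStrictOrderedRing R]

theorem IsLowerTriangular.isUnit_det_of_diag_pos {L : Matrix n n R} (hL : L.IsLowerTriangular)
    (hd : ∀ i, 0 < L i i) : IsUnit L.det := by
  rw [det_of_isLowerTriangular L hL]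
  exact (Finset.prod_pos fun i _ => hd i).ne'.isUnit

theorem IsLowerTriangular.eq_of_mul_transpose_eq {L L' : Matrix n n R}
    (hL : L.IsLowerTriangular) (hL' : L'.IsLowerTriangular)
    (hd : ∀ i, 0 < L i i) (hd' : ∀ i, 0 < L' i i) (h : L * Lᵀ = L' * L'ᵀ) : L = L' := by
  -- `D = L'⁻¹ L = L'ᵀ (Lᵀ)⁻¹` is both lower and upper triangular, hence diagonal, and comparing
  -- diagonals in `L = L' D`, `L' = L D` forces `D = 1`.
  have := L.invertibleOfIsUnitDet (hL.isUnit_det_of_diag_pos hd)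
  have := L'.invertibleOfIsUnitDet (hL'.isUnit_det_of_diag_pos hd')
  set D := L'⁻¹ * L with hD
  have hL_eq : L = L' * D := (mul_inv_cancel_left_of_invertible L' L).symm
  have hL'_eq : L'ᵀ = D * Lᵀ := by
    rw [hD, Matrix.mul_assoc, h, inv_mul_cancel_left_of_invertible]
  have hD_lower : D.IsLowerTriangular := (blockTriangular_inv_of_blockTriangular hL').mul hL
  have hD_upper : D.IsUpperTriangular := by
    have := invertibleTranspose L
    have hD' : D = L'ᵀ * (Lᵀ)⁻¹ := by rw [hL'_eq, mul_inv_cancel_right_of_invertible]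
    rw [hD']
    exact hL'.transpose.mul (blockTriangular_inv_of_blockTriangular hL.transpose)
  have hD_diag : D.IsDiag := fun i j hij => hij.lt_or_gt.elim (hD_lower ·) (hD_upper ·)
  set d := D.diag
  have hD_eq : D = diagonal d := hD_diag.diagonal_diag.symm
  have hLd : ∀ i, L i i = L' i i * d i := fun i => by
    rw [hL_eq, hD_eq, mul_diagonal]
  have hL'd : ∀ i, L' i i = d i * L i i := fun i => by
    simpa [hD_eq, diagonal_mul] using congrFun (congrFun hL'_eq i) i
  have hd_one : ∀ i, d i = 1 := fun i => by
    have hpos : 0 < d i := pos_of_mul_pos_right (hLd i ▸ hd i) (hd' i).le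
    have hsq : d i * d i = 1 := by
      have := hLd i
      rw [hL'd i] at this
      nlinarith [hd i]
    nlinarith
  rw [hL_eq, hD_eq, show d = fun _ => 1 from funext hd_one, diagonal_one, Matrix.mul_one]

end Cholesky

theorem submatrix_mul_transpose_self {R m n l o : Type*} [Fintype n] [Mul R] [AddCommMonoid R]
    (N : Matrix m n R) (e : l → m) (f : o → m) :
    (N * Nᵀ).submatrix e f = N.submatrix e id * (N.submatrix f id)ᵀ := by
  rw [submatrix_mul N Nᵀ e id f Function.bijective_id, transpose_submatrix]

section ReducedCholesky

variable {R : Type*} {p K : ℕ}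

def IsMockLowerTriangular [Zero R] (N : Matrix (Fin p) (Fin K) R) : Prop :=
  ∀ (i : Fin p) (j : Fin K), (i : ℕ) < (j : ℕ) → N i j = 0

theorem IsMockLowerTriangular.isLowerTriangular_submatrix [Zero R]
    {N : Matrix (Fin p) (Fin K) R} (hN : N.IsMockLowerTriangular) (hK : K ≤ p) :
    (N.submatrix (Fin.castLE hK) id).IsLowerTriangular :=
  fun _ _ hij => hN _ _ hij

theorem IsMockLowerTriangular.eq_of_mul_transpose_eq [Field R] [LinearOrder R]
    [IsStrictOrderedRing R] (hK : K ≤ p) {N M : Matrix (Fin p) (Fin K) R}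
    (hN : N.IsMockLowerTriangular) (hM : M.IsMockLowerTriangular)
    (hNd : ∀ i, 0 < N (Fin.castLE hK i) i) (hMd : ∀ i, 0 < M (Fin.castLE hK i) i)
    (h : N * Nᵀ = M * Mᵀ) : N = M := by
  set L := N.submatrix (Fin.castLE hK) id
  have hL : L.IsLowerTriangular := hN.isLowerTriangular_submatrix hK
  have hML : M.submatrix (Fin.castLE hK) id = L := by
    refine (hM.isLowerTriangular_submatrix hK).eq_of_mul_transpose_eq hL hMd hNd ?_
    rw [← submatrix_mul_transpose_self, ← submatrix_mul_transpose_self, h]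
  have hNM : N * Lᵀ = M * Lᵀ := by
    simpa only [submatrix_mul_transpose_self, submatrix_id_id, hML] using
      congrArg (·.submatrix id (Fin.castLE hK)) h
  have := L.invertibleOfIsUnitDet (hL.isUnit_det_of_diag_pos hNd)
  have := invertibleTranspose L
  exact mul_left_injective_of_invertible Lᵀ hNM

end ReducedCholesky

theorem PosSemidef.exists_eq_gram {𝕜 n : Type*} [RCLike 𝕜] [Fintype n] {A : Matrix n n 𝕜}
    (hA : A.PosSemidef) :
    ∃ v : n → EuclideanSpace 𝕜 n, A = gram 𝕜 v ∧ finrank 𝕜 (span 𝕜 (Set.range v)) = A.rank := by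
  classical
  obtain ⟨B, rfl⟩ : ∃ B : Matrix n n 𝕜, A = star B * B := by
    open scoped MatrixOrder in exact CStarAlgebra.nonneg_iff_eq_star_mul_self.mp hA.nonneg
  let e := (WithLp.linearEquiv 2 𝕜 (n → 𝕜)).symm
  refine ⟨fun i => e (B.col i), ?_, ?_⟩
  · ext i j
    simp [gram_apply, mul_apply, e, EuclideanSpace.inner_toLp_toLp, dotProduct, mul_comm]
  · rw [star_eq_conjTranspose, rank_conjTranspose_mul_self, rank_eq_finrank_span_cols,
      Set.range_comp', span_image_linearEquiv, LinearEquiv.finrank_map_eq]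

end Matrix

section GramSchmidt

variable {𝕜 E ι : Type*} [RCLike 𝕜] [NormedAddCommGroup E] [InnerProductSpace 𝕜 E]
  [LinearOrder ι] [LocallyFiniteOrderBot ι] [WellFoundedLT ι]

theorem inner_gramSchmidt_self (f : ι → E) (i : ι) :
    inner 𝕜 (gramSchmidt 𝕜 f i) (f i) = (‖gramSchmidt 𝕜 f i‖ : 𝕜) ^ 2 := by
  conv_lhs => rw [gramSchmidt_def'' 𝕜 f i]
  rw [inner_add_right, inner_self_eq_norm_sq_to_K, inner_sum, add_eq_left]
  exact Finset.sum_eq_zero fun k hk => by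
    rw [inner_smul_right, gramSchmidt_orthogonal 𝕜 f (Finset.mem_Iio.1 hk).ne', mul_zero]

theorem inner_gramSchmidtOrthonormalBasis_self_pos {F : Type*} [NormedAddCommGroup F]
    [InnerProductSpace ℝ F] [FiniteDimensional ℝ F] [Fintype ι]
    (h : finrank ℝ F = Fintype.card ι) {f : ι → F} (hf : LinearIndependent ℝ f) (i : ι) :
    0 < inner ℝ (gramSchmidtOrthonormalBasis h f i) (f i) := by
  have hn : gramSchmidtNormed ℝ f i ≠ 0 :=
    norm_ne_zero_iff.1 ((gramSchmidtNormed_unit_length i hf).symm ▸ one_ne_zero)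
  rw [gramSchmidtOrthonormalBasis_apply h hn, gramSchmidtNormed, real_inner_smul_left,
    inner_gramSchmidt_self]
  have := norm_pos_iff.2 (gramSchmidt_ne_zero i hf)
  positivity

end GramSchmidt

theorem LinearIndependent.of_inner_right {𝕜 E n ι : Type*} [RCLike 𝕜] [NormedAddCommGroup E]
    [InnerProductSpace 𝕜 E] (v : n → E) {w : ι → E}
    (h : LinearIndependent 𝕜 fun j i => inner 𝕜 (v i) (w j)) : LinearIndependent 𝕜 w :=
  h.of_comp (LinearMap.pi fun i => innerₛₗ 𝕜 (v i))

theorem exists_isMockLowerTriangular_gram_eq_mul_transpose {E : Type*} [NormedAddCommGroup E]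
    [InnerProductSpace ℝ E] {p K : ℕ} (hK : K ≤ p) (v : Fin p → E)
    (hspan : finrank ℝ (span ℝ (Set.range v)) = K)
    (hv : LinearIndependent ℝ (v ∘ Fin.castLE hK)) :
    ∃ N : Matrix (Fin p) (Fin K) ℝ, gram ℝ v = N * Nᵀ ∧ N.IsMockLowerTriangular ∧
      ∀ i, 0 < N (Fin.castLE hK i) i := by
  set W := span ℝ (Set.range v)
  have : FiniteDimensional ℝ W := .span_of_finite ℝ (Set.finite_range v)
  let w : Fin p → W := fun i => ⟨v i, subset_span ⟨i, rfl⟩⟩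
  have hw : LinearIndependent ℝ (w ∘ Fin.castLE hK) := .of_comp W.subtype hv
  let b := gramSchmidtOrthonormalBasis (hspan.trans (Fintype.card_fin K).symm) (w ∘ Fin.castLE hK)
  refine ⟨of fun i j => b.repr (w i) j, ?_, fun i j hij => ?_, fun i => ?_⟩
  · have hvw : gram ℝ v = gram ℝ w := by ext; simp [gram_apply, w]
    rw [hvw, gram_eq_conjTranspose_mul b w, conjTranspose_eq_transpose_of_trivial]
    rfl
  · exact gramSchmidtOrthonormalBasis_inv_triangular' _ (w ∘ Fin.castLE hK)
      (i := ⟨i, hij.trans j.isLt⟩) hij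
  · simpa [b.repr_apply_apply] using inner_gramSchmidtOrthonormalBasis_self_pos _ hw i

/-- existence and uniqueness of the reduced Cholesky factor of a
restricted PSD matrix. -/
theorem reduced_cholesky_exists_unique (p K : ℕ) (hK : K ≤ p)
    (A : Matrix (Fin p) (Fin p) ℝ)
    (hpsd : A.PosSemidef) (hrank : A.rank = K)
    (hind : LinearIndependent ℝ
      (fun j : Fin K => fun i : Fin p => A i (Fin.castLE hK j))) :
    ∃! N : Matrix (Fin p) (Fin K) ℝ,
      A = N * Nᵀ ∧
      (∀ (i : Fin p) (j : Fin K), (i : ℕ) < (j : ℕ) → N i j = 0) ∧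
      (∀ i : Fin K, 0 < N (Fin.castLE hK i) i) := by
  obtain ⟨v, rfl, hspan⟩ := hpsd.exists_eq_gram
  obtain ⟨N, hN, hNtri, hNd⟩ := exists_isMockLowerTriangular_gram_eq_mul_transpose hK v
    (hspan.trans hrank) (.of_inner_right v hind)
  refine ⟨N, ⟨hN, hNtri, hNd⟩, fun M ⟨hM, hMtri, hMd⟩ => ?_⟩
  exact IsMockLowerTriangular.eq_of_mul_transpose_eq hK hMtri hNtri hMd hNd (hM.symm.trans hN)
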